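/- Suppose d = 1 (scalar parameter). Fix a configuration y : S → X, blocks A_1,…,A_C ⊆ S, and real numbers θ* and θ*_CL. Let Var(θ) denote the variance of s under the full Gibbs distribution f(·∣θ), and let Var_i(θ) denote the variance of s under the conditional distribution u ↦ f_{A_i}(y[A_i↦u]∣θ). If ∑_{i=1}^C Var_i(θ*_CL) ≠ 0 and the weight is chosen as w = Var(θ*) / ∑_{i=1}^C Var_i(θ*_CL), then the second derivative of θ ↦ log f(y∣θ) at θ* equals the second derivative of θ ↦ w ∑_{i=1}^C log f_{A_i}(y∣θ) at θ*_CL. -/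

import Mathlib

/-!
For a finite exponential family `t ↦ exp (t c) / Z(t)` with `Z(t) = ∑ᵢ exp (t aᵢ)`, the first
derivative of the log-likelihood is `c` minus the Gibbs mean of `a`, and the derivative of the
Gibbs mean is the Gibbs variance; so the second derivative of the log-likelihood is minus the
variance. Applied to the full likelihood and to each block conditional likelihood, both sides
become `-Var(θ*)`, the right one because `w` rescales `-∑ᵢ Varᵢ(θ*_CL)`.
-/

open scoped BigOperators

/-- `updOn y A u` is the configuration equal to `u` on `A` and to `y` off `A`. -/
def updOn {S X : Type} [DecidableEq S] (y : S → X) (A : Finset S) (u : A → X) :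
    S → X :=
  fun i => if h : i ∈ A then u ⟨i, h⟩ else y i

/-- Full Gibbs likelihood with scalar parameter:
`f(y∣θ) = exp (θ s(y)) / ∑ₓ exp (θ s(x))`. -/
noncomputable def fFull1 {S X : Type} [Fintype S] [Fintype X] [DecidableEq S]
    (s : (S → X) → ℝ) (y : S → X) (θ : ℝ) : ℝ :=
  Real.exp (θ * s y) / ∑ x : S → X, Real.exp (θ * s x)

/-- Block conditional likelihood with scalar parameter:
`f_A(y∣θ) = exp (θ s(y)) / ∑_{u : A → X} exp (θ s(y[A↦u]))`. -/
noncomputable def fBlock1 {S X : Type} [Fintype S] [Fintype X] [DecidableEq S]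
    (s : (S → X) → ℝ) (A : Finset S) (y : S → X) (θ : ℝ) : ℝ :=
  Real.exp (θ * s y) / ∑ u : A → X, Real.exp (θ * s (updOn y A u))

/-- Variance of `s` under the full Gibbs distribution `f(·∣θ)`. -/
noncomputable def varFull {S X : Type} [Fintype S] [Fintype X] [DecidableEq S]
    (s : (S → X) → ℝ) (θ : ℝ) : ℝ :=
  (∑ x : S → X, s x ^ 2 * fFull1 s x θ) - (∑ x : S → X, s x * fFull1 s x θ) ^ 2

/-- Variance of `s` under the conditional distribution `u ↦ f_A(y[A↦u]∣θ)`. -/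
noncomputable def varBlock {S X : Type} [Fintype S] [Fintype X] [DecidableEq S]
    (s : (S → X) → ℝ) (A : Finset S) (y : S → X) (θ : ℝ) : ℝ :=
  (∑ u : A → X, s (updOn y A u) ^ 2 * fBlock1 s A (updOn y A u) θ)
    - (∑ u : A → X, s (updOn y A u) * fBlock1 s A (updOn y A u) θ) ^ 2

open Real

section GibbsFamily

variable {ι : Type*} [Fintype ι]

noncomputable def partitionFn (a : ι → ℝ) (t : ℝ) : ℝ :=
  ∑ i, exp (t * a i)

noncomputable def gibbsMean (a : ι → ℝ) (t : ℝ) : ℝ :=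
  (∑ i, a i * exp (t * a i)) / partitionFn a t

noncomputable def gibbsVar (a : ι → ℝ) (t : ℝ) : ℝ :=
  (∑ i, a i ^ 2 * exp (t * a i)) / partitionFn a t - gibbsMean a t ^ 2

theorem partitionFn_pos [Nonempty ι] (a : ι → ℝ) (t : ℝ) : 0 < partitionFn a t :=
  Finset.sum_pos (fun _ _ => exp_pos _) Finset.univ_nonempty

theorem gibbsVar_eq_sum_mul_div (a : ι → ℝ) (t : ℝ) :
    gibbsVar a t = ∑ i, a i ^ 2 * (exp (t * a i) / partitionFn a t)
      - (∑ i, a i * (exp (t * a i) / partitionFn a t)) ^ 2 := by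
  simp only [gibbsVar, gibbsMean, ← mul_div_assoc, Finset.sum_div]

theorem hasDerivAt_sum_mul_exp (a b : ι → ℝ) (t : ℝ) :
    HasDerivAt (fun t => ∑ i, b i * exp (t * a i)) (∑ i, b i * a i * exp (t * a i)) t := by
  refine (HasDerivAt.fun_sum fun i _ =>
    ((hasDerivAt_mul_const (a i)).exp).const_mul (b i)).congr_deriv ?_
  exact Finset.sum_congr rfl fun i _ => by ring

theorem hasDerivAt_partitionFn (a : ι → ℝ) (t : ℝ) :
    HasDerivAt (partitionFn a) (∑ i, a i * exp (t * a i)) t := by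
  have h := hasDerivAt_sum_mul_exp a 1 t
  simp only [Pi.one_apply, one_mul] at h
  exact h

theorem hasDerivAt_gibbsMean [Nonempty ι] (a : ι → ℝ) (t : ℝ) :
    HasDerivAt (gibbsMean a) (gibbsVar a t) t := by
  have quotient_rule_eq : ∀ m₁ m₂ Z : ℝ, Z ≠ 0 →
      (m₂ * Z - m₁ ^ 2) / Z ^ 2 = m₂ / Z - (m₁ / Z) ^ 2 := by
    intro m₁ m₂ Z hZ
    field_simp
  refine ((hasDerivAt_sum_mul_exp a a t).fun_div (hasDerivAt_partitionFn a t)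
    (partitionFn_pos a t).ne').congr_deriv ?_
  simp only [← sq]
  exact quotient_rule_eq _ _ _ (partitionFn_pos a t).ne'

theorem hasDerivAt_log_exp_div_partitionFn [Nonempty ι] (a : ι → ℝ) (c t : ℝ) :
    HasDerivAt (fun t => log (exp (t * c) / partitionFn a t)) (c - gibbsMean a t) t := by
  have hlog : (fun t => log (exp (t * c) / partitionFn a t))
      = fun t => t * c - log (partitionFn a t) := by
    funext t
    rw [log_div (exp_ne_zero _) (partitionFn_pos a t).ne', log_exp]
  rw [hlog]
  exact (hasDerivAt_mul_const c).sub ((hasDerivAt_partitionFn a t).log (partitionFn_pos a t).ne')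

theorem deriv_deriv_log_exp_div_partitionFn [Nonempty ι] (a : ι → ℝ) (c θ : ℝ) :
    deriv (deriv fun t => log (exp (t * c) / partitionFn a t)) θ = -gibbsVar a θ := by
  have hderiv : deriv (fun t => log (exp (t * c) / partitionFn a t)) = fun t => c - gibbsMean a t :=
    funext fun t => (hasDerivAt_log_exp_div_partitionFn a c t).deriv
  rw [hderiv]
  exact ((hasDerivAt_gibbsMean a θ).const_sub c).deriv

theorem deriv_deriv_sum_log_exp_div_partitionFn {J : Type*} [Fintype J] {κ : J → Type*}
    [∀ j, Fintype (κ j)] [∀ j, Nonempty (κ j)] (a : ∀ j, κ j → ℝ) (c θ : ℝ) :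
    deriv (deriv fun t => ∑ j, log (exp (t * c) / partitionFn (a j) t)) θ
      = -∑ j, gibbsVar (a j) θ := by
  have hderiv : deriv (fun t => ∑ j, log (exp (t * c) / partitionFn (a j) t))
      = fun t => ∑ j, (c - gibbsMean (a j) t) :=
    funext fun t =>
      (HasDerivAt.fun_sum fun j _ => hasDerivAt_log_exp_div_partitionFn (a j) c t).deriv
  rw [hderiv, ← Finset.sum_neg_distrib]
  exact (HasDerivAt.fun_sum fun j _ => (hasDerivAt_gibbsMean (a j) θ).const_sub c).deriv

end GibbsFamily

section ConfigurationModel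

variable {S X : Type} [DecidableEq S]

theorem updOn_updOn (y : S → X) (A : Finset S) (u v : A → X) :
    updOn (updOn y A u) A v = updOn y A v := by
  funext i
  by_cases h : i ∈ A <;> simp [updOn, h]

variable [Fintype S] [Fintype X]

theorem varFull_eq_gibbsVar (s : (S → X) → ℝ) (θ : ℝ) : varFull s θ = gibbsVar s θ := by
  rw [gibbsVar_eq_sum_mul_div]
  rfl

theorem varBlock_eq_gibbsVar (s : (S → X) → ℝ) (A : Finset S) (y : S → X) (θ : ℝ) :
    varBlock s A y θ = gibbsVar (fun u => s (updOn y A u)) θ := by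
  rw [gibbsVar_eq_sum_mul_div]
  simp only [varBlock, fBlock1, updOn_updOn]
  rfl

theorem deriv_deriv_log_fFull1 (s : (S → X) → ℝ) (y : S → X) (θ : ℝ) :
    deriv (deriv fun t => log (fFull1 s y t)) θ = -varFull s θ := by
  have : Nonempty (S → X) := ⟨y⟩
  rw [varFull_eq_gibbsVar]
  exact deriv_deriv_log_exp_div_partitionFn s (s y) θ

theorem deriv_deriv_sum_log_fBlock1 {J : Type*} [Fintype J] (s : (S → X) → ℝ) (A : J → Finset S)
    (y : S → X) (θ : ℝ) :
    deriv (deriv fun t => ∑ j, log (fBlock1 s (A j) y t)) θ = -∑ j, varBlock s (A j) y θ := by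
  have : ∀ j, Nonempty (A j → X) := fun j => ⟨fun i => y i⟩
  simp only [varBlock_eq_gibbsVar]
  exact deriv_deriv_sum_log_exp_div_partitionFn (fun j u => s (updOn y (A j) u)) (s y) θ

end ConfigurationModel

theorem magnitude_adjustment_scalar_general {S X : Type} [Fintype S] [Fintype X]
    [DecidableEq S]
    (s : (S → X) → ℝ) (y : S → X) (C : ℕ) (A : Fin C → Finset S)
    (θstar θCL : ℝ)
    (hne : ∑ i : Fin C, varBlock s (A i) y θCL ≠ 0) :
    deriv (deriv (fun t : ℝ => Real.log (fFull1 s y t))) θstar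
      = deriv
          (deriv (fun t : ℝ =>
            (varFull s θstar / ∑ i : Fin C, varBlock s (A i) y θCL) *
              ∑ i : Fin C, Real.log (fBlock1 s (A i) y t)))
          θCL := by
  simp only [deriv_const_mul_field', deriv_deriv_log_fFull1, deriv_deriv_sum_log_fBlock1]
  field_simp

/-- Magnitude adjustment in the scalar-parameter case: with the weight
`w = Var(θ*) / ∑ᵢ Varᵢ(θ*_CL)`, the second derivative of the log-likelihood at θ*
matches that of the weighted composite log-likelihood at θ*_CL. -/
theorem magnitude_adjustment_scalar {S X : Type} [Fintype S] [Fintype X]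
    [Nonempty X] [DecidableEq S]
    (s : (S → X) → ℝ) (y : S → X) (C : ℕ) (A : Fin C → Finset S)
    (θstar θCL : ℝ)
    (hne : ∑ i : Fin C, varBlock s (A i) y θCL ≠ 0) :
    deriv (deriv (fun t : ℝ => Real.log (fFull1 s y t))) θstar
      = deriv
          (deriv (fun t : ℝ =>
            (varFull s θstar / ∑ i : Fin C, varBlock s (A i) y θCL) *
              ∑ i : Fin C, Real.log (fBlock1 s (A i) y t)))
          θCL :=
  magnitude_adjustment_scalar_general s y C A θstar θCL hne
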